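/- (Eckart–Young lower bound for rank-one approximation, Frobenius norm.) For every real matrix M ∈ ℝ^{m×n} and all vectors c ∈ ℝ^m, d ∈ ℝ^n, ‖M − c dᵀ‖_F² ≥ ‖M‖_F² − ‖M‖₂². -/

import Mathlib

open Matrix

/-- Frobenius norm of a real matrix. -/
noncomputable def frobNorm {m n : ℕ} (A : Matrix (Fin m) (Fin n) ℝ) : ℝ :=
  Real.sqrt (∑ i, ∑ j, (A i j) ^ 2)

/-- Euclidean norm of a real vector. -/
noncomputable def euclNorm {n : ℕ} (x : Fin n → ℝ) : ℝ :=
  Real.sqrt (∑ i, (x i) ^ 2)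

/-- The ℓ²→ℓ² operator norm (spectral norm, largest singular value):
`‖A‖₂ = sup_{x ≠ 0} ‖A x‖₂ / ‖x‖₂`. -/
noncomputable def specNorm {m n : ℕ} (A : Matrix (Fin m) (Fin n) ℝ) : ℝ :=
  sSup {t : ℝ | ∃ x : Fin n → ℝ, x ≠ 0 ∧ t = euclNorm (A.mulVec x) / euclNorm x}

/-!
Expanding the square, `‖M - c dᵀ‖_F² = ‖M‖_F² - 2 cᵀ M d + ‖c‖² ‖d‖²`. By Cauchy–Schwarz and the
definition of the spectral norm, `cᵀ M d ≤ ‖c‖ ‖M d‖ ≤ ‖M‖₂ ‖c‖ ‖d‖`, and `2ab ≤ a² + b²` with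
`a = ‖M‖₂`, `b = ‖c‖ ‖d‖` absorbs the cross term into `‖M‖₂² + ‖c‖² ‖d‖²`.
-/

section Norms

variable {m n : ℕ}

lemma euclNorm_nonneg (x : Fin n → ℝ) : 0 ≤ euclNorm x :=
  Real.sqrt_nonneg _

lemma euclNorm_sq (x : Fin n → ℝ) : euclNorm x ^ 2 = ∑ i, x i ^ 2 :=
  Real.sq_sqrt (Finset.sum_nonneg fun _ _ => sq_nonneg _)

lemma euclNorm_pos {x : Fin n → ℝ} (hx : x ≠ 0) : 0 < euclNorm x := by
  obtain ⟨i, hi⟩ := Function.ne_iff.1 hx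
  exact Real.sqrt_pos.2 <| Finset.sum_pos' (fun _ _ => sq_nonneg _)
    ⟨i, Finset.mem_univ i, pow_pos (abs_pos.2 hi) 2 |>.trans_eq (sq_abs _)⟩

lemma dotProduct_le_euclNorm_mul (x y : Fin n → ℝ) : x ⬝ᵥ y ≤ euclNorm x * euclNorm y :=
  Real.sum_mul_le_sqrt_mul_sqrt _ x y

lemma frobNorm_sq (A : Matrix (Fin m) (Fin n) ℝ) : frobNorm A ^ 2 = ∑ i, ∑ j, A i j ^ 2 :=
  Real.sq_sqrt (Finset.sum_nonneg fun _ _ => Finset.sum_nonneg fun _ _ => sq_nonneg _)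

lemma euclNorm_mulVec_le_frobNorm_mul (A : Matrix (Fin m) (Fin n) ℝ) (x : Fin n → ℝ) :
    euclNorm (A *ᵥ x) ≤ frobNorm A * euclNorm x := by
  rw [euclNorm, frobNorm, euclNorm, ← Real.sqrt_mul (x := ∑ i, ∑ j, A i j ^ 2)
    (Finset.sum_nonneg fun _ _ => Finset.sum_nonneg fun _ _ => sq_nonneg _), Finset.sum_mul]
  exact Real.sqrt_le_sqrt <| Finset.sum_le_sum fun i _ =>
    Finset.sum_mul_sq_le_sq_mul_sq Finset.univ (A i) x

lemma bddAbove_mulVec_ratios (A : Matrix (Fin m) (Fin n) ℝ) :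
    BddAbove {t : ℝ | ∃ x : Fin n → ℝ, x ≠ 0 ∧ t = euclNorm (A *ᵥ x) / euclNorm x} := by
  refine ⟨frobNorm A, ?_⟩
  rintro t ⟨x, hx, rfl⟩
  exact (div_le_iff₀ (euclNorm_pos hx)).2 (euclNorm_mulVec_le_frobNorm_mul A x)

lemma euclNorm_mulVec_le_specNorm_mul (A : Matrix (Fin m) (Fin n) ℝ) (x : Fin n → ℝ) :
    euclNorm (A *ᵥ x) ≤ specNorm A * euclNorm x := by
  rcases eq_or_ne x 0 with rfl | hx
  · simp [euclNorm]
  · rw [← div_le_iff₀ (euclNorm_pos hx)]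
    exact le_csSup (bddAbove_mulVec_ratios A) ⟨x, hx, rfl⟩

end Norms

lemma frobNorm_sub_vecMulVec_sq {m n : ℕ} (M : Matrix (Fin m) (Fin n) ℝ)
    (c : Fin m → ℝ) (d : Fin n → ℝ) :
    frobNorm (M - vecMulVec c d) ^ 2 =
      frobNorm M ^ 2 - 2 * (c ⬝ᵥ (M *ᵥ d)) + (euclNorm c * euclNorm d) ^ 2 := by
  rw [frobNorm_sq, frobNorm_sq, mul_pow, euclNorm_sq, euclNorm_sq, Finset.sum_mul_sum,
    dotProduct, Finset.mul_sum, ← Finset.sum_sub_distrib, ← Finset.sum_add_distrib]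
  refine Finset.sum_congr rfl fun i _ => ?_
  rw [mulVec, dotProduct, Finset.mul_sum, Finset.mul_sum, ← Finset.sum_sub_distrib,
    ← Finset.sum_add_distrib]
  refine Finset.sum_congr rfl fun j _ => ?_
  rw [Matrix.sub_apply, vecMulVec_apply]
  ring

/-- Eckart–Young lower bound for rank-one Frobenius approximation:
`‖M − c dᵀ‖_F² ≥ ‖M‖_F² − ‖M‖₂²`. -/
theorem eckart_young_rank_one_lower_bound {m n : ℕ} (M : Matrix (Fin m) (Fin n) ℝ)
    (c : Fin m → ℝ) (d : Fin n → ℝ) :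
    (frobNorm M) ^ 2 - (specNorm M) ^ 2 ≤
      (frobNorm (M - Matrix.vecMulVec c d)) ^ 2 := by
  have cross_le : c ⬝ᵥ (M *ᵥ d) ≤ specNorm M * (euclNorm c * euclNorm d) :=
    calc c ⬝ᵥ (M *ᵥ d) ≤ euclNorm c * euclNorm (M *ᵥ d) := dotProduct_le_euclNorm_mul _ _
      _ ≤ euclNorm c * (specNorm M * euclNorm d) :=
        mul_le_mul_of_nonneg_left (euclNorm_mulVec_le_specNorm_mul M d) (euclNorm_nonneg c)
      _ = specNorm M * (euclNorm c * euclNorm d) := by ring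
  rw [frobNorm_sub_vecMulVec_sq]
  linarith [two_mul_le_add_sq (specNorm M) (euclNorm c * euclNorm d)]
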